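/- For any vector ψ = (1/√N) Σ_j e^{iθ_j} |j⟩ (a maximally coherent state) and the dephasing map Λ with off-diagonal factors 1+α_{μν}, the l₁-coherence of the output is C_{l₁}(Λ(|ψ⟩⟨ψ|)) = (1/N) Σ_{μ≠ν} |1+α_{μν}|, independently of the phases θ_j. Consequently, the l₁-decohering power of Λ equals D(Λ) = N − 1 − (1/N) Σ_{μ≠ν} |1+α_{μν}|, and 0 ≤ D(Λ) ≤ N−1. -/

import Mathlib

open Matrix BigOperators

/-- The `l₁`-coherence measure `C_{l₁}(ρ) = ∑_{μ≠ν} |ρ_{μν}|`. -/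
noncomputable def Cl1 {N : ℕ} (ρ : Matrix (Fin N) (Fin N) ℂ) : ℝ :=
  ∑ μ, ∑ ν, if μ ≠ ν then ‖ρ μ ν‖ else 0

/-- Dephasing-type map with off-diagonal factors `1 + α μ ν`. -/
noncomputable def dephasingMap {N : ℕ} (α : Fin N → Fin N → ℂ)
    (ρ : Matrix (Fin N) (Fin N) ℂ) : Matrix (Fin N) (Fin N) ℂ :=
  Matrix.of fun μ ν => if μ = ν then ρ μ ν else (1 + α μ ν) * ρ μ ν

/-!
Every entry of `|ψ⟩⟨ψ|` for a maximally coherent `ψ` has modulus `1/N`, so after dephasing the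
off-diagonal moduli are `|1 + α_{μν}| / N`. Since each of the `N (N - 1)` off-diagonal factors has
modulus at most `1`, their sum over `N` lies between `0` and `N - 1`.
-/

theorem norm_ofReal_mul_exp_mul_conj (r a b : ℝ) :
    ‖(r : ℂ) * Complex.exp (Complex.I * a) *
      (starRingEnd ℂ) ((r : ℂ) * Complex.exp (Complex.I * b))‖ = r ^ 2 := by
  simp [Complex.norm_exp, sq]

theorem Cl1_dephasingMap_of_norm_eq {N : ℕ} (α : Fin N → Fin N → ℂ)
    (ρ : Matrix (Fin N) (Fin N) ℂ) (c : ℝ) (hρ : ∀ μ ν, μ ≠ ν → ‖ρ μ ν‖ = c) :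
    Cl1 (dephasingMap α ρ) = c * ∑ μ, ∑ ν, (if μ ≠ ν then ‖1 + α μ ν‖ else 0) := by
  simp only [Cl1, Finset.mul_sum]
  refine Finset.sum_congr rfl fun μ _ => Finset.sum_congr rfl fun ν _ => ?_
  split_ifs with h
  · simp [dephasingMap, h, hρ μ ν h, mul_comm]
  · exact (mul_zero c).symm

theorem sum_offDiag_le_card_mul {ι : Type*} [Fintype ι] [DecidableEq ι] (f : ι → ι → ℝ)
    (hf : ∀ μ ν, μ ≠ ν → f μ ν ≤ 1) :
    ∑ μ, ∑ ν, (if μ ≠ ν then f μ ν else 0) ≤ Fintype.card ι * (Fintype.card ι - 1) := by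
  have hrow (μ : ι) : ∑ ν, (if μ ≠ ν then f μ ν else 0) ≤ Fintype.card ι - 1 := by
    calc ∑ ν, (if μ ≠ ν then f μ ν else 0) ≤ ∑ ν ∈ Finset.univ.erase μ, 1 := by
          rw [← Finset.filter_ne, Finset.sum_filter]
          gcongr with ν
          split_ifs with h
          · exact hf μ ν h
          · rfl
      _ = Fintype.card ι - 1 := by
          rw [Finset.sum_const, Finset.card_erase_of_mem (Finset.mem_univ μ), Finset.card_univ,
            nsmul_one, Nat.cast_pred (Fintype.card_pos_iff.2 ⟨μ⟩)]
  calc _ ≤ ∑ _μ : ι, ((Fintype.card ι : ℝ) - 1) := Finset.sum_le_sum fun μ _ => hrow μ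
    _ = _ := by rw [Finset.sum_const, Finset.card_univ, nsmul_eq_mul]

/-- For any maximally coherent state `ψ_j = e^{iθ_j}/√N`,
`C_{l₁}(Λ(|ψ⟩⟨ψ|)) = (1/N) ∑_{μ≠ν} |1+α_{μν}|` independently of the phases; hence the
`l₁`-decohering power is `D = N - 1 - (1/N) ∑_{μ≠ν} |1+α_{μν}|` and `0 ≤ D ≤ N-1`. -/
theorem stmt7 {N : ℕ} (hN : 1 ≤ N) (α : Fin N → Fin N → ℂ)
    (hα : ∀ μ ν, μ ≠ ν → ‖1 + α μ ν‖ ≤ 1) (θ : Fin N → ℝ) :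
    Cl1 (dephasingMap α (Matrix.of fun μ ν : Fin N =>
        ((1 / Real.sqrt N : ℝ) : ℂ) * Complex.exp (Complex.I * θ μ) *
          (starRingEnd ℂ) (((1 / Real.sqrt N : ℝ) : ℂ) * Complex.exp (Complex.I * θ ν))))
      = (1 / N : ℝ) * ∑ μ, ∑ ν, (if μ ≠ ν then ‖1 + α μ ν‖ else 0) ∧
    0 ≤ (N : ℝ) - 1 - (1 / N : ℝ) * ∑ μ, ∑ ν, (if μ ≠ ν then ‖1 + α μ ν‖ else 0) ∧
    (N : ℝ) - 1 - (1 / N : ℝ) * ∑ μ, ∑ ν, (if μ ≠ ν then ‖1 + α μ ν‖ else 0)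
      ≤ (N : ℝ) - 1 := by
  set S := ∑ μ, ∑ ν, (if μ ≠ ν then ‖1 + α μ ν‖ else 0)
  have hNpos : (0 : ℝ) < N := by exact_mod_cast hN
  have hS_nonneg : 0 ≤ S := by positivity
  have hS_le : S ≤ N * (N - 1) :=
    (sum_offDiag_le_card_mul (fun μ ν => ‖1 + α μ ν‖) hα).trans_eq (by rw [Fintype.card_fin])
  refine ⟨Cl1_dephasingMap_of_norm_eq α _ _ fun μ ν _ => ?_, ?_, ?_⟩
  · rw [of_apply, norm_ofReal_mul_exp_mul_conj, div_pow, Real.sq_sqrt (Nat.cast_nonneg N),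
      one_pow]
  · have : 1 / (N : ℝ) * S ≤ N - 1 := by
      rw [one_div_mul_eq_div, div_le_iff₀ hNpos]
      linarith
    linarith
  · have : 0 ≤ 1 / (N : ℝ) * S := by positivity
    linarith
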